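/- arXiv:2112.06742 — 5 statements merged into one kernel-verified Lean document; each statement's English description precedes it below -/
import Mathlib

section
/- Let γ_1, ..., γ_T ∈ ℝ^K be stochastic vectors and let M ≥ 1 with M + 1 ≤ T. Then the minimal residual of the memory problem is at most the minimal residual of the memoryless problem: the infimum over column-stochastic matrices Λ̂ ∈ ℝ^{K×K^M} of Σ_{t=M+1}^{T} ‖γ_t − Λ̂ Ψ^M(γ_{t−1}, ..., γ_{t−M})‖_2^2 is less than or equal to the infimum over column-stochastic matrices Λ ∈ ℝ^{K×K} of Σ_{t=M+1}^{T} ‖γ_t − Λ γ_{t−1}‖_2^2. -/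
/-!
Every memoryless transition matrix `Λ` is also a memory model: let `Λ̂` read only the most recent
state of a path, `Λ̂ i idx = Λ i (idx 0)`. Summing the path affiliation over the older states
marginalises them away, because each `γ_s` is stochastic, so
`Λ̂ Ψ^M(γ_{t-1}, …, γ_{t-M}) = Λ γ_{t-1}`.
Hence every residual of the memoryless problem is a residual of the memory problem.
-/

open Finset Matrix

section PathAffiliation

variable {R ι n m : Type*} [CommSemiring R] [Fintype ι] [DecidableEq ι] [Fintype n]

theorem sum_mul_prod_apply_eq_mul_prod_sum (g : n → R) (γ : ι → n → R) (z : ι) :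
    ∑ idx : ι → n, g (idx z) * ∏ s, γ s (idx s)
      = (∑ j, g j * γ z j) * ∏ s ∈ univ.erase z, ∑ j, γ s j := by
  set f := Function.update γ z (fun j => g j * γ z j)
  have hf : ∀ s ∈ univ.erase z, f s = γ s := fun s hs =>
    Function.update_of_ne (ne_of_mem_erase hs) _ _
  have hprod : ∀ idx : ι → n, g (idx z) * ∏ s, γ s (idx s) = ∏ s, f s (idx s) := by
    intro idx
    rw [← mul_prod_erase _ _ (mem_univ z), ← mul_prod_erase _ _ (mem_univ z),
      prod_congr rfl fun s hs => congrFun (hf s hs) (idx s)]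
    simp only [f, Function.update_self, mul_assoc]
  rw [sum_congr rfl fun idx _ => hprod idx, ← Fintype.prod_sum,
    ← mul_prod_erase _ _ (mem_univ z), prod_congr rfl fun s hs => by rw [hf s hs]]
  simp only [f, Function.update_self]

def Matrix.liftAlong (Λ : Matrix m n R) (z : ι) : Matrix m (ι → n) R :=
  of fun i idx => Λ i (idx z)

theorem Matrix.liftAlong_mulVec_prod (Λ : Matrix m n R) (z : ι) (γ : ι → n → R)
    (hγ : ∀ s, ∑ j, γ s j = 1) :
    Λ.liftAlong z *ᵥ (fun idx => ∏ s, γ s (idx s)) = Λ *ᵥ γ z := by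
  ext i
  simp only [mulVec, dotProduct, liftAlong, of_apply, sum_mul_prod_apply_eq_mul_prod_sum,
    hγ, prod_const_one, mul_one]

end PathAffiliation

theorem stmt_4_general (K M T : ℕ) (hM : 1 ≤ M)
    (γ : ℕ → Fin K → ℝ)
    (hγ : ∀ t, 1 ≤ t → t ≤ T → (∀ i, 0 ≤ γ t i) ∧ ∑ i, γ t i = 1) :
    sInf {r : ℝ | ∃ Λhat : Matrix (Fin K) (Fin M → Fin K) ℝ,
        (∀ i j, 0 ≤ Λhat i j) ∧ (∀ j, ∑ i, Λhat i j = 1) ∧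
        r = ∑ t ∈ Finset.Icc (M + 1) T, ∑ i,
            (γ t i - Λhat.mulVec
              (fun idx : Fin M → Fin K => ∏ s : Fin M, γ (t - 1 - s.val) (idx s)) i) ^ 2}
      ≤ sInf {r : ℝ | ∃ Λ : Matrix (Fin K) (Fin K) ℝ,
        (∀ i j, 0 ≤ Λ i j) ∧ (∀ j, ∑ i, Λ i j = 1) ∧
        r = ∑ t ∈ Finset.Icc (M + 1) T, ∑ i, (γ t i - Λ.mulVec (γ (t - 1)) i) ^ 2} := by
  obtain ⟨hone_nonneg, hone_col⟩ :=
    mem_colStochastic_iff_sum.1 (one_mem (colStochastic ℝ (Fin K)))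
  refine csInf_le_csInf ⟨0, ?_⟩ ⟨_, 1, hone_nonneg, hone_col, rfl⟩ ?_
  · rintro r ⟨Λhat, -, -, rfl⟩
    positivity
  rintro r ⟨Λ, hpos, hcol, rfl⟩
  let z : Fin M := ⟨0, hM⟩
  refine ⟨liftAlong Λ z, fun i idx => hpos i (idx z), fun idx => hcol (idx z), ?_⟩
  refine sum_congr rfl fun t ht => ?_
  have hsum : ∀ s : Fin M, ∑ j, γ (t - 1 - s.val) j = 1 := fun s =>
    (hγ _ (by grind) (by grind)).2
  rw [liftAlong_mulVec_prod Λ z _ hsum]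
  rfl

/-- For stochastic vectors `γ_1, ..., γ_T ∈ ℝ^K` and `M ≥ 1` with
`M + 1 ≤ T`, the minimal residual (infimum of the sum of squared Euclidean errors)
of the memory (mSPA) problem over column-stochastic `Λ̂ ∈ ℝ^{K×K^M}` is at most the
minimal residual of the memoryless (SPA II) problem over column-stochastic
`Λ ∈ ℝ^{K×K}`. -/
theorem stmt_4 (K M T : ℕ) (hM : 1 ≤ M) (hMT : M + 1 ≤ T)
    (γ : ℕ → Fin K → ℝ)
    (hγ : ∀ t, 1 ≤ t → t ≤ T → (∀ i, 0 ≤ γ t i) ∧ ∑ i, γ t i = 1) :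
    sInf {r : ℝ | ∃ Λhat : Matrix (Fin K) (Fin M → Fin K) ℝ,
        (∀ i j, 0 ≤ Λhat i j) ∧ (∀ j, ∑ i, Λhat i j = 1) ∧
        r = ∑ t ∈ Finset.Icc (M + 1) T, ∑ i,
            (γ t i - Λhat.mulVec
              (fun idx : Fin M → Fin K => ∏ s : Fin M, γ (t - 1 - s.val) (idx s)) i) ^ 2}
      ≤ sInf {r : ℝ | ∃ Λ : Matrix (Fin K) (Fin K) ℝ,
        (∀ i j, 0 ≤ Λ i j) ∧ (∀ j, ∑ i, Λ i j = 1) ∧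
        r = ∑ t ∈ Finset.Icc (M + 1) T, ∑ i, (γ t i - Λ.mulVec (γ (t - 1)) i) ^ 2} :=
  stmt_4_general K M T hM γ hγ
end

section
/- Let K ≤ D and let σ_1, ..., σ_K ∈ ℝ^D be points that are affinely dependent (so their convex hull is not a (K−1)-dimensional simplex), with Σ ∈ ℝ^{D×K} the matrix with columns σ_1, ..., σ_K. Then there exist K affinely independent points σ̃_1, ..., σ̃_K ∈ ℝ^D (forming a matrix Σ̃) whose convex hull contains the convex hull of σ_1, ..., σ_K; consequently, for all data points x_1, ..., x_T ∈ ℝ^D and all stochastic vectors γ_1, ..., γ_T ∈ ℝ^K there exist stochastic vectors γ̃_1, ..., γ̃_T ∈ ℝ^K with Σ_{t=1}^T ‖x_t − Σ̃ γ̃_t‖_2^2 ≤ Σ_{t=1}^T ‖x_t − Σ γ_t‖_2^2. -/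
/-!
The points span an affine subspace of dimension at most `K - 1 ≤ D`, so they lie in the image of
an injective affine map `ℝ^(K-1) → ℝ^D`. In `ℝ^(K-1)` their preimages are bounded, hence
contained in a large enough scaled and translated copy of the corner simplex
`conv {0, e₁, …, e_(K-1)}`; the image of that copy is the simplex `Σ̃`. Every `Σ γ_t` then lies in
the convex hull of the columns of `Σ̃`, so it equals `Σ̃ γ̃_t` for a stochastic `γ̃_t`, and the
error does not change.
-/

open Module Set

theorem Submodule.exists_le_finrank_eq {K V : Type*} [DivisionRing K] [AddCommGroup V]
    [Module K V] [FiniteDimensional K V] (p : Submodule K V) {n : ℕ}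
    (hp : finrank K p ≤ n) (hn : n ≤ finrank K V) :
    ∃ q : Submodule K V, p ≤ q ∧ finrank K q = n := by
  induction n with
  | zero => exact ⟨p, le_rfl, by omega⟩
  | succ n ih =>
    rcases hp.eq_or_lt with hp | hp
    · exact ⟨p, le_rfl, hp⟩
    obtain ⟨q, hpq, hq⟩ := ih (by omega) (by omega)
    obtain ⟨v, -, hv⟩ : ∃ v ∈ (⊤ : Submodule K V), v ∉ q :=
      SetLike.exists_of_lt (lt_top_iff_ne_top.2 fun h => by rw [h, finrank_top] at hq; omega)
    exact ⟨q ⊔ span K {v}, hpq.trans le_sup_left, by rw [finrank_sup_span_singleton hv, hq]⟩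

theorem mem_convexHull_range_iff_exists_stdSimplex {R E ι : Type*} [Field R] [LinearOrder R]
    [IsStrictOrderedRing R] [AddCommGroup E] [Module R E] [Fintype ι] {q : ι → E} {x : E} :
    x ∈ convexHull R (range q) ↔ ∃ w ∈ stdSimplex R ι, ∑ i, w i • q i = x := by
  classical
  have hq : range q = Fintype.linearCombination R q '' range fun i => Pi.single i 1 := by
    rw [← range_comp]
    congr
    ext i
    simp [Fintype.linearCombination_apply_single]
  rw [hq, ← LinearMap.image_convexHull, convexHull_rangle_single_eq_stdSimplex]
  simp [Fintype.linearCombination_apply]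

def cornerSimplex (k : Type*) [Ring k] [Nontrivial k] (n : ℕ) : Affine.Simplex k (Fin n → k) n where
  points := Fin.cons 0 fun j => Pi.single j 1
  independent := by
    rw [affineIndependent_iff_linearIndependent_vsub k _ 0]
    convert (Pi.basisFun k (Fin n)).linearIndependent.comp
      (fun i : {i : Fin (n + 1) // i ≠ 0} => i.1.pred i.2)
      fun i j h => Subtype.ext (Fin.pred_inj.1 h) using 1
    · ext ⟨i, hi⟩ : 1
      obtain ⟨j, rfl⟩ := Fin.exists_succ_eq.2 hi
      simp
    · rfl

theorem mem_convexHull_cornerSimplex {𝕜 : Type*} [Field 𝕜] [LinearOrder 𝕜]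
    [IsStrictOrderedRing 𝕜] {n : ℕ} {x : Fin n → 𝕜} (hx : ∀ j, 0 ≤ x j) (hsum : ∑ j, x j ≤ 1) :
    x ∈ convexHull 𝕜 (range (cornerSimplex 𝕜 n).points) := by
  refine mem_convexHull_range_iff_exists_stdSimplex.2
    ⟨Fin.cons (1 - ∑ j, x j) x, ⟨fun i => ?_, ?_⟩, ?_⟩
  · cases i using Fin.cases <;> simp [hx, hsum]
  · simp [Fin.sum_univ_succ]
  · simpa [Fin.sum_univ_succ, cornerSimplex] using (pi_eq_sum_univ' x).symm

theorem exists_simplex_subset_convexHull_of_isBounded {n : ℕ} {s : Set (Fin n → ℝ)}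
    (hs : Bornology.IsBounded s) :
    ∃ S : Affine.Simplex ℝ (Fin n → ℝ) n, s ⊆ convexHull ℝ (range S.points) := by
  obtain ⟨R, hR, hsR⟩ := hs.exists_pos_norm_le
  -- `s` lies in the cube `[-R, R]ⁿ`; the coordinates of `u + R` are in `[0, 2R]`, summing to `< a`.
  set a : ℝ := 2 * n * R + 1
  have ha : 0 < a := by positivity
  let f : (Fin n → ℝ) →ᵃ[ℝ] (Fin n → ℝ) :=
    (a • LinearMap.id).toAffineMap + AffineMap.const ℝ _ fun _ => -R
  have hf : ∀ y, f y = a • y + fun _ => -R := fun y => rfl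
  have hf_inj : Function.Injective f := fun y z h =>
    smul_right_injective _ ha.ne' (by simpa [hf] using h)
  refine ⟨(cornerSimplex ℝ n).map f hf_inj, fun u hu => ?_⟩
  have hu : ∀ j, |u j| ≤ R := fun j => (norm_le_pi_norm u j).trans (hsR u hu)
  rw [Affine.Simplex.map_points, range_comp, ← f.image_convexHull]
  refine ⟨a⁻¹ • (u + fun _ => R), mem_convexHull_cornerSimplex (fun j => ?_) ?_, ?_⟩
  · simp only [Pi.smul_apply, Pi.add_apply, smul_eq_mul]
    exact mul_nonneg (inv_nonneg.2 ha.le) (by linarith [neg_abs_le (u j), hu j])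
  · simp only [Pi.smul_apply, Pi.add_apply, smul_eq_mul, ← Finset.mul_sum]
    rw [inv_mul_le_iff₀ ha, mul_one]
    calc ∑ j, (u j + R) ≤ ∑ _j : Fin n, 2 * R :=
          Finset.sum_le_sum fun j _ => by linarith [le_abs_self (u j), hu j]
      _ ≤ a := by
        rw [Finset.sum_const, Finset.card_univ, Fintype.card_fin, nsmul_eq_mul]
        linarith
  · ext j
    simp [hf, smul_smul, ha.ne']

theorem exists_injective_affineMap_range_subset {k E : Type*} [Field k] [AddCommGroup E]
    [Module k E] [FiniteDimensional k E] {n : ℕ} (σ : Fin (n + 1) → E) (hn : n ≤ finrank k E) :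
    ∃ f : (Fin n → k) →ᵃ[k] E, Function.Injective f ∧ range σ ⊆ range f := by
  obtain ⟨W, hVW, hW⟩ := (vectorSpan k (range σ)).exists_le_finrank_eq
    (finrank_vectorSpan_range_le k σ (Fintype.card_fin _)) hn
  let e : (Fin n → k) ≃ₗ[k] W := LinearEquiv.ofFinrankEq _ _ (by simp [hW])
  let L : (Fin n → k) →ₗ[k] E := W.subtype ∘ₗ e.toLinearMap
  have hL : Function.Injective L := W.injective_subtype.comp e.injective
  refine ⟨L.toAffineMap + AffineMap.const k _ (σ 0), fun x y h => hL (by simpa using h), ?_⟩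
  rintro _ ⟨i, rfl⟩
  have hi : σ i - σ 0 ∈ W := hVW (vsub_mem_vectorSpan k (mem_range_self i) (mem_range_self 0))
  exact ⟨e.symm ⟨_, hi⟩, by simp [L]⟩

theorem exists_simplex_range_subset_convexHull {E : Type*} [AddCommGroup E] [Module ℝ E]
    [FiniteDimensional ℝ E] {n : ℕ} (σ : Fin (n + 1) → E) (hn : n ≤ finrank ℝ E) :
    ∃ S : Affine.Simplex ℝ E n, range σ ⊆ convexHull ℝ (range S.points) := by
  obtain ⟨f, hf, hσf⟩ := exists_injective_affineMap_range_subset σ hn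
  obtain ⟨S, hS⟩ := exists_simplex_subset_convexHull_of_isBounded
    ((finite_range σ).preimage hf.injOn).isBounded
  refine ⟨S.map f hf, ?_⟩
  rw [Affine.Simplex.map_points, range_comp, ← f.image_convexHull,
    ← image_preimage_eq_of_subset hσf]
  exact image_mono hS

theorem exists_affineIndependent_convexHull_range_subset {E : Type*} [AddCommGroup E]
    [Module ℝ E] [FiniteDimensional ℝ E] {K : ℕ} (σ : Fin K → E) (hK : K ≤ finrank ℝ E + 1) :
    ∃ σt : Fin K → E, AffineIndependent ℝ σt ∧
      convexHull ℝ (range σ) ⊆ convexHull ℝ (range σt) := by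
  cases K with
  | zero => exact ⟨σ, affineIndependent_of_subsingleton ℝ σ, le_rfl⟩
  | succ n =>
    obtain ⟨S, hS⟩ := exists_simplex_range_subset_convexHull σ (by omega)
    exact ⟨S.points, S.independent, convexHull_min hS (convex_convexHull ℝ _)⟩

theorem stmt_7_general (D K : ℕ) (hKD : K ≤ D) (σ : Fin K → Fin D → ℝ) :
    ∃ σt : Fin K → Fin D → ℝ, AffineIndependent ℝ σt ∧
      convexHull ℝ (Set.range σ) ⊆ convexHull ℝ (Set.range σt) ∧
      ∀ (T : ℕ) (x : Fin T → Fin D → ℝ) (γ : Fin T → Fin K → ℝ),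
        (∀ t, (∀ k, 0 ≤ γ t k) ∧ ∑ k, γ t k = 1) →
        ∃ γt : Fin T → Fin K → ℝ,
          (∀ t, (∀ k, 0 ≤ γt t k) ∧ ∑ k, γt t k = 1) ∧
          ∑ t, ∑ d, (x t d - ∑ k, γt t k * σt k d) ^ 2 ≤
            ∑ t, ∑ d, (x t d - ∑ k, γ t k * σ k d) ^ 2 := by
  obtain ⟨σt, hσt, hsub⟩ := exists_affineIndependent_convexHull_range_subset σ
    (by rw [finrank_fin_fun]; omega)
  refine ⟨σt, hσt, hsub, fun T x γ hγ => ?_⟩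
  have hγt : ∀ t, ∃ w ∈ stdSimplex ℝ (Fin K), ∑ k, w k • σt k = ∑ k, γ t k • σ k := fun t =>
    mem_convexHull_range_iff_exists_stdSimplex.1
      (hsub (mem_convexHull_range_iff_exists_stdSimplex.2 ⟨γ t, hγ t, rfl⟩))
  choose γt hγt_mem hγt_eq using hγt
  refine ⟨γt, hγt_mem, (Finset.sum_congr rfl fun t _ => Finset.sum_congr rfl fun d _ => ?_).le⟩
  have hd := congrFun (hγt_eq t) d
  simp only [Finset.sum_apply, Pi.smul_apply, smul_eq_mul] at hd
  rw [hd]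

/-- Let `K ≤ D` and let `σ_1,...,σ_K ∈ ℝ^D` be affinely dependent.
Then there exist affinely independent points `σ̃_1,...,σ̃_K ∈ ℝ^D` whose convex hull
contains the convex hull of the `σ_k`; consequently for all data `x_1,...,x_T` and
stochastic `γ_1,...,γ_T` there are stochastic `γ̃_1,...,γ̃_T` with total squared
error w.r.t. `Σ̃` no larger than that w.r.t. `Σ`. -/
theorem stmt_7 (D K : ℕ) (hKD : K ≤ D) (σ : Fin K → Fin D → ℝ)
    (hdep : ¬ AffineIndependent ℝ σ) :
    ∃ σt : Fin K → Fin D → ℝ, AffineIndependent ℝ σt ∧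
      convexHull ℝ (Set.range σ) ⊆ convexHull ℝ (Set.range σt) ∧
      ∀ (T : ℕ) (x : Fin T → Fin D → ℝ) (γ : Fin T → Fin K → ℝ),
        (∀ t, (∀ k, 0 ≤ γ t k) ∧ ∑ k, γ t k = 1) →
        ∃ γt : Fin T → Fin K → ℝ,
          (∀ t, (∀ k, 0 ≤ γt t k) ∧ ∑ k, γt t k = 1) ∧
          ∑ t, ∑ d, (x t d - ∑ k, γt t k * σt k d) ^ 2 ≤
            ∑ t, ∑ d, (x t d - ∑ k, γ t k * σ k d) ^ 2 :=
  stmt_7_general D K hKD σ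
end

section
/- Let K, M ≥ 1, let Λ̂ ∈ ℝ^{K×K^M} be a matrix whose columns are indexed by tuples (j_1, ..., j_M) ∈ {1, ..., K}^M, and let γ_{t−1}, ..., γ_{t−M} ∈ ℝ^K be stochastic vectors. Set ψ_{t−1} = Ψ^M(γ_{t−1}, ..., γ_{t−M}), define γ_t ∈ ℝ^K by γ_t^i = Σ_{(j_1,...,j_M)} Λ̂_{i,(j_1,...,j_M)} ψ_{t−1}^{(j_1,...,j_M)}, and set ψ_t = Ψ^M(γ_t, γ_{t−1}, ..., γ_{t−M+1}). Then for all indices i, i_1, ..., i_{M−1} ∈ {1, ..., K}: ψ_t^{(i, i_1, ..., i_{M−1})} = Σ_{j=1}^{K} Σ_{(j_1,...,j_M)} Λ̂_{i,(j_1,...,j_M)} · ψ_{t−1}^{(j_1,...,j_M)} · ψ_{t−1}^{(i_1,...,i_{M−1}, j)}. In particular, the induced map ψ_{t−1} ↦ ψ_t is componentwise a quadratic polynomial in the components of ψ_{t−1}. -/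
/-- The embedded mSPA dynamics on path affiliations are componentwise
quadratic. With memory depth `M = m + 1`, previous barycentric coordinates
`γprev 0 = γ_{t-1}, ..., γprev m = γ_{t-M}` (stochastic vectors),
`ψprev = Ψ^M(γ_{t-1},...,γ_{t-M})`, `γt = Λ̂ ψprev`, and
`ψt = Ψ^M(γ_t, γ_{t-1}, ..., γ_{t-M+1})`, for all indices `i, i_1,...,i_{M-1}`:
`ψt^{(i,i_1,...,i_{M-1})}
  = ∑_j ∑_{(j_1,...,j_M)} Λ̂_{i,(j_1..j_M)} ψprev^{(j_1..j_M)} ψprev^{(i_1..i_{M-1},j)}`. -/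
theorem stmt_9 (K m : ℕ) (hK : 1 ≤ K)
    (Λhat : Matrix (Fin K) (Fin (m + 1) → Fin K) ℝ)
    (γprev : Fin (m + 1) → Fin K → ℝ)
    (hγ : ∀ s, (∀ i, 0 ≤ γprev s i) ∧ ∑ i, γprev s i = 1)
    (ψprev : (Fin (m + 1) → Fin K) → ℝ)
    (hψprev : ψprev = fun idx => ∏ s, γprev s (idx s))
    (γt : Fin K → ℝ)
    (hγt : γt = fun i => ∑ idx : Fin (m + 1) → Fin K, Λhat i idx * ψprev idx)
    (ψt : (Fin (m + 1) → Fin K) → ℝ)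
    (hψt : ψt = fun idx => γt (idx 0) * ∏ s : Fin m, γprev s.castSucc (idx s.succ)) :
    ∀ (i : Fin K) (iv : Fin m → Fin K),
      ψt (Fin.cons i iv) =
        ∑ j : Fin K, ∑ idx : Fin (m + 1) → Fin K,
          Λhat i idx * ψprev idx * ψprev (Fin.snoc iv j) := by
  intro i iv
  have hsnoc : ∀ j : Fin K, ψprev (Fin.snoc iv j)
      = (∏ s : Fin m, γprev s.castSucc (iv s)) * γprev (Fin.last m) j := by
    intro j
    simp only [hψprev, Fin.prod_univ_castSucc, Fin.snoc_castSucc, Fin.snoc_last]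
  have hsum : ∑ j : Fin K, ψprev (Fin.snoc iv j)
      = ∏ s : Fin m, γprev s.castSucc (iv s) := by
    simp only [hsnoc, ← Finset.mul_sum, (hγ (Fin.last m)).2, mul_one]
  calc ψt (Fin.cons i iv)
      = γt i * ∏ s : Fin m, γprev s.castSucc (iv s) := by
        rw [hψt]; simp
    _ = γt i * ∑ j : Fin K, ψprev (Fin.snoc iv j) := by rw [hsum]
    _ = ∑ j : Fin K, ∑ idx : Fin (m + 1) → Fin K,
          Λhat i idx * ψprev idx * ψprev (Fin.snoc iv j) := by
        rw [hγt, Finset.mul_sum]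
        refine Finset.sum_congr rfl fun j _ => ?_
        rw [Finset.sum_mul]
end

section
/- Let A be a set, let F : A → A be a bijection, let ρ : A → Δ^{K−1} be any map into the unit simplex, and let M ≥ 1. Define the M-delay-coordinate map Φ^M : A → (Δ^{K−1})^M by Φ^M(x) = (ρ(x), ρ(F^{−1}(x)), ..., ρ(F^{−M+1}(x))), and suppose Φ^M is injective on A. Then there exists a function v, defined on the image of Ψ^M ∘ Φ^M, with values in Δ^{K−1}, such that for every x ∈ A: v(Ψ^M(Φ^M(x))) = ρ(F(x)). Equivalently, writing γ_s = ρ(x_s) along a trajectory x_s = F(x_{s−1}), the next barycentric coordinate γ_t is a well-defined function of the path affiliation ψ^M_{t−1} = Ψ^M(γ_{t−1}, ..., γ_{t−M}). -/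
lemma marginal_aux {M K : ℕ} (g : Fin M → Fin K → ℝ)
    (hsum : ∀ j, ∑ k, g j k = 1) (j : Fin M) (i : Fin K) :
    ∑ idx : Fin M → Fin K, (if idx j = i then ∏ j', g j' (idx j') else 0) = g j i := by
  have h := Finset.prod_univ_sum (fun _ : Fin M => (Finset.univ : Finset (Fin K)))
    (fun j' k => if j' = j then (if k = i then g j i else 0) else g j' k)
  rw [Fintype.piFinset_univ] at h
  have h2 : ∀ idx : Fin M → Fin K,
      (∏ j', (if j' = j then (if idx j' = i then g j i else 0) else g j' (idx j')))
      = (if idx j = i then ∏ j', g j' (idx j') else 0) := by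
    intro idx
    by_cases hij : idx j = i
    · rw [if_pos hij]
      refine Finset.prod_congr rfl fun j' _ => ?_
      by_cases hj : j' = j
      · subst hj; simp [hij]
      · simp [hj]
    · rw [if_neg hij]
      apply Finset.prod_eq_zero (Finset.mem_univ j)
      simp [hij]
  rw [Finset.sum_congr rfl (fun idx _ => h2 idx)] at h
  rw [← h]
  rw [Finset.prod_eq_single j]
  · simp
  · intro j' _ hj'
    simp [hj', hsum j']
  · intro h'; exact absurd (Finset.mem_univ j) h'

/-- Let `F : A → A` be a bijection, `ρ : A → Δ^{K-1}` a map into the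
unit simplex, and `M ≥ 1`. If the `M`-delay-coordinate map
`Φ^M(x) = (ρ(x), ρ(F⁻¹(x)), ..., ρ(F^{-M+1}(x)))` is injective on `A`, then there
is a function `v` on the path affiliations with `v(Ψ^M(Φ^M(x))) = ρ(F(x))` for all
`x ∈ A`; i.e. the next barycentric coordinate is a well-defined function of the
path affiliation. -/
theorem stmt_11 (K M : ℕ) (hM : 1 ≤ M) {A : Type*} (F : A ≃ A)
    (ρ : A → Fin K → ℝ)
    (hρ : ∀ x, (∀ k, 0 ≤ ρ x k) ∧ ∑ k, ρ x k = 1)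
    (hinj : Function.Injective
      (fun x : A => fun j : Fin M => ρ (((F.symm : A → A))^[j.val] x))) :
    ∃ v : ((Fin M → Fin K) → ℝ) → (Fin K → ℝ),
      ∀ x : A,
        v (fun idx : Fin M → Fin K =>
            ∏ j : Fin M, ρ (((F.symm : A → A))^[j.val] x) (idx j)) = ρ (F x) := by
  set ψ : A → (Fin M → Fin K) → ℝ :=
    fun x => fun idx => ∏ j : Fin M, ρ ((F.symm : A → A)^[j.val] x) (idx j) with hψ
  have hψinj : Function.Injective ψ := by
    intro x y hxy
    apply hinj
    funext j i
    have hx := marginal_aux (fun j' => ρ ((F.symm : A → A)^[j'.val] x))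
      (fun j' => (hρ _).2) j i
    have hy := marginal_aux (fun j' => ρ ((F.symm : A → A)^[j'.val] y))
      (fun j' => (hρ _).2) j i
    show ρ ((F.symm : A → A)^[j.val] x) i = ρ ((F.symm : A → A)^[j.val] y) i
    rw [← hx, ← hy]
    refine Finset.sum_congr rfl fun idx _ => ?_
    have : ψ x idx = ψ y idx := by rw [hxy]
    simp only [hψ] at this
    rw [this]
  refine ⟨Function.extend ψ (fun x => ρ (F x)) (fun _ => 0), fun x => ?_⟩
  exact hψinj.extend_apply (fun x => ρ (F x)) (fun _ => 0) x
end

section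
/- Let A be a set, let F : A → A be a bijection, let ρ : A → Δ^{K−1} be any map into the unit simplex, and let M ≥ 1. Define Φ^M : A → (Δ^{K−1})^M by Φ^M(x) = (ρ(x), ρ(F^{−1}(x)), ..., ρ(F^{−M+1}(x))), and suppose Φ^M is injective on A. Then the composition Ψ^M ∘ Φ^M is an injection from A into the unit simplex Δ^{K^M−1} ⊂ ℝ^{K^M} of path affiliations. -/

lemma marginal_helper (M K : ℕ) (γ : Fin M → Fin K → ℝ)
    (hsum : ∀ i, ∑ k, γ i k = 1) (j : Fin M) (k : Fin K) :
    ∑ idx : Fin M → Fin K, (if idx j = k then 1 else 0) *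
      ∏ i, γ i (idx i) = γ j k := by
  set γ' : Fin M → Fin K → ℝ := fun i k' =>
    if i = j then (if k' = k then γ j k else 0) else γ i k' with hγ'
  have key : ∀ idx : Fin M → Fin K,
      (if idx j = k then 1 else 0) * ∏ i, γ i (idx i) = ∏ i, γ' i (idx i) := by
    intro idx
    by_cases h : idx j = k
    · rw [if_pos h, one_mul]
      refine Finset.prod_congr rfl fun i _ => ?_
      by_cases hi : i = j
      · subst hi; simp [hγ', h]
      · simp [hγ', hi]
    · rw [if_neg h, zero_mul]
      symm
      apply Finset.prod_eq_zero (Finset.mem_univ j)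
      simp [hγ', h]
  simp only [key]
  have h2 := Finset.prod_univ_sum (fun _ : Fin M => (Finset.univ : Finset (Fin K)))
    (fun i k' => γ' i k')
  rw [Fintype.piFinset_univ] at h2
  rw [← h2]
  have : ∀ i, ∑ k', γ' i k' = if i = j then γ j k else 1 := by
    intro i
    by_cases hi : i = j <;> simp [hγ', hi, hsum i]
  simp only [this]
  simp

/-- With `F : A → A` a bijection, `ρ : A → Δ^{K-1}`, `M ≥ 1`, and the
delay map `Φ^M(x) = (ρ(x), ρ(F⁻¹(x)), ..., ρ(F^{-M+1}(x)))` injective on `A`, the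
composition `Ψ^M ∘ Φ^M` is an injection from `A` into the unit simplex
`Δ^{K^M - 1} ⊂ ℝ^{K^M}` of path affiliations. -/
theorem stmt_12 (K M : ℕ) (hM : 1 ≤ M) {A : Type*} (F : A ≃ A)
    (ρ : A → Fin K → ℝ)
    (hρ : ∀ x, (∀ k, 0 ≤ ρ x k) ∧ ∑ k, ρ x k = 1)
    (hinj : Function.Injective
      (fun x : A => fun j : Fin M => ρ (((F.symm : A → A))^[j.val] x))) :
    Function.Injective
      (fun x : A => fun idx : Fin M → Fin K =>
        ∏ j : Fin M, ρ (((F.symm : A → A))^[j.val] x) (idx j)) ∧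
    ∀ x : A,
      (∀ idx : Fin M → Fin K,
        0 ≤ ∏ j : Fin M, ρ (((F.symm : A → A))^[j.val] x) (idx j)) ∧
      ∑ idx : Fin M → Fin K,
        ∏ j : Fin M, ρ (((F.symm : A → A))^[j.val] x) (idx j) = 1 := by
  constructor
  · intro x y hxy
    apply hinj
    funext j; funext k
    have hx := marginal_helper M K (fun j => ρ ((F.symm : A → A)^[j.val] x))
      (fun i => (hρ _).2) j k
    have hy := marginal_helper M K (fun j => ρ ((F.symm : A → A)^[j.val] y))
      (fun i => (hρ _).2) j k
    simp only at hxy hx hy ⊢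
    rw [← hx, ← hy]
    refine Finset.sum_congr rfl fun idx _ => ?_
    rw [congrFun hxy idx]
  · intro x
    constructor
    · intro idx
      exact Finset.prod_nonneg fun i _ => (hρ _).1 _
    · have h2 := Finset.prod_univ_sum (fun _ : Fin M => (Finset.univ : Finset (Fin K)))
        (fun (j : Fin M) (k : Fin K) => ρ ((F.symm : A → A)^[j.val] x) k)
      rw [Fintype.piFinset_univ] at h2
      rw [← h2]
      simp only [(hρ _).2, Finset.prod_const_one]
end
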